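/- arXiv:0910.2037 — 5 statements merged into one kernel-verified Lean document; each statement's English description precedes it below -/
import Mathlib

section
/- Let Z be a compact Hausdorff space and let η be a quasi-state on Z. Then η is monotone: for all F, G ∈ C(Z) with F(z) ≤ G(z) for every z ∈ Z, one has η(F) ≤ η(G). -/
/-- For `F ∈ C(Z)`, the subalgebra `C(F)` of `C(Z)` generated by `F`:
the set of functions of the form `φ ∘ F` with `φ` continuous. -/
def qsAlgebra {Z : Type*} [TopologicalSpace Z] (F : C(Z, ℝ)) : Set C(Z, ℝ) :=
  {G | ∃ φ : C(ℝ, ℝ), G = φ.comp F}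

/-- A quasi-state on a compact space `Z` (Aarnes): `η 1 = 1`, `η` is nonnegative on
nonnegative functions, and `η` is linear on `C(F)` for every `F ∈ C(Z)`. -/
structure IsQuasiState {Z : Type*} [TopologicalSpace Z] (η : C(Z, ℝ) → ℝ) : Prop where
  map_one : η 1 = 1
  nonneg : ∀ F : C(Z, ℝ), (∀ z, 0 ≤ F z) → 0 ≤ η F
  linear : ∀ F : C(Z, ℝ), ∀ G ∈ qsAlgebra F, ∀ H ∈ qsAlgebra F, ∀ a b : ℝ,
      η (a • G + b • H) = a * η G + b * η H

/-! Slice `F` and `G` into layers of height `ε`. Wherever the `(i+1)`-st layer of `F` is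
positive, `F`, hence `G`, has passed the top of the `i`-th layer of `G`, which is therefore
saturated there; so both layers are continuous functions of their sum, and `η` compares them
linearly. Summing over `i` gives `η F ≤ η G + ε`. -/

open Set Finset

noncomputable def layer (a δ : ℝ) : C(ℝ, ℝ) :=
  ⟨fun x => min (max (x - a) 0) δ, by fun_prop⟩

lemma layer_apply (a δ x : ℝ) : layer a δ x = min (max (x - a) 0) δ := rfl

lemma layer_mem_Icc {δ : ℝ} (hδ : 0 ≤ δ) (a x : ℝ) : layer a δ x ∈ Icc 0 δ :=
  ⟨le_min (le_max_right _ _) hδ, min_le_right _ _⟩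

lemma lt_of_layer_pos {a δ x : ℝ} (h : 0 < layer a δ x) : a < x := by
  by_contra! hx
  rw [layer_apply, max_eq_right (by linarith)] at h
  exact (min_le_left 0 δ).not_gt h

lemma layer_of_add_le {a δ x : ℝ} (h : a + δ ≤ x) : layer a δ x = δ := by
  rw [layer_apply, min_eq_right (le_max_of_le_left (by linarith))]

lemma sum_layer {δ : ℝ} (hδ : 0 ≤ δ) (a x : ℝ) (n : ℕ) :
    ∑ i ∈ range n, layer (a + i * δ) δ x = min (max (x - a) 0) (n * δ) := by
  induction n with
  | zero => simp
  | succ n ih =>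
    rw [sum_range_succ, ih, layer_apply]
    push_cast
    have hnδ : 0 ≤ n * δ := by positivity
    rcases le_total (x - a) (n * δ) with h | h
    · rw [max_eq_right (a := x - (a + n * δ)) (by linarith), min_eq_left hδ,
        min_eq_left (max_le h hnδ), min_eq_left (max_le (by linarith) (by positivity)), add_zero]
    · rw [max_eq_left (a := x - (a + n * δ)) (by linarith), max_eq_left (hnδ.trans h),
        min_eq_right h, ← min_add_add_left]
      ring_nf

namespace IsQuasiState

variable {Z : Type*} [TopologicalSpace Z] {η : C(Z, ℝ) → ℝ}

/-- The restriction of `η` to `C(K)`, pulled back along `φ ↦ φ ∘ K`. -/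
def restrict (hη : IsQuasiState η) (K : C(Z, ℝ)) : C(ℝ, ℝ) →ₗ[ℝ] ℝ where
  toFun φ := η (φ.comp K)
  map_add' φ ψ := by simpa using hη.linear K _ ⟨φ, rfl⟩ _ ⟨ψ, rfl⟩ 1 1
  map_smul' c φ := by simpa using hη.linear K _ ⟨φ, rfl⟩ _ ⟨φ, rfl⟩ c 0

variable (hη : IsQuasiState η)
include hη

lemma restrict_apply (K : C(Z, ℝ)) (φ : C(ℝ, ℝ)) : hη.restrict K φ = η (φ.comp K) := rfl

lemma map_const (c : ℝ) : η (ContinuousMap.const Z c) = c := by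
  have h := hη.linear 1 1 ⟨1, rfl⟩ 1 ⟨1, rfl⟩ c 0
  rw [zero_smul, add_zero, hη.map_one, mul_one, zero_mul, add_zero] at h
  rwa [show ContinuousMap.const Z c = c • 1 by ext; simp]

lemma map_comp_le_map_comp {K : C(Z, ℝ)} {φ ψ : C(ℝ, ℝ)} (h : ∀ z, φ (K z) ≤ ψ (K z)) :
    η (φ.comp K) ≤ η (ψ.comp K) := by
  have : 0 ≤ hη.restrict K (ψ - φ) := hη.nonneg _ fun z => by simpa using h z
  rwa [map_sub, sub_nonneg] at this

lemma map_le_of_le_const {F : C(Z, ℝ)} {c : ℝ} (h : ∀ z, F z ≤ c) : η F ≤ c := by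
  simpa [hη.map_const] using
    hη.map_comp_le_map_comp (K := F) (φ := ContinuousMap.id ℝ) (ψ := ContinuousMap.const ℝ c) h

/-- The saturation condition makes `f` and `g` both continuous functions of `f + g`. -/
lemma map_le_map_of_saturated {f g : C(Z, ℝ)} {δ : ℝ} (hf : ∀ z, f z ∈ Icc 0 δ)
    (hg : ∀ z, g z ∈ Icc 0 δ) (hsat : ∀ z, 0 < f z → g z = δ) : η f ≤ η g := by
  let φ : C(ℝ, ℝ) := ⟨fun x => max x δ - δ, by fun_prop⟩
  let ψ : C(ℝ, ℝ) := ⟨fun x => min x δ, by fun_prop⟩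
  have hφ : φ.comp (f + g) = f := by
    ext z
    rcases (hf z).1.eq_or_lt with h | h
    · simp [φ, ← h, (hg z).2]
    · simp [φ, hsat z h, (hf z).1]
  have hψ : ψ.comp (f + g) = g := by
    ext z
    rcases (hf z).1.eq_or_lt with h | h
    · simp [ψ, ← h, (hg z).2]
    · simp [ψ, hsat z h, (hf z).1]
  have hle : ∀ z, f z ≤ g z := fun z => by
    rcases (hf z).1.eq_or_lt with h | h
    · exact h ▸ (hg z).1
    · exact hsat z h ▸ (hf z).2
  have := hη.map_comp_le_map_comp (K := f + g) (φ := φ) (ψ := ψ) fun z => by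
    change (φ.comp (f + g)) z ≤ (ψ.comp (f + g)) z
    rw [hφ, hψ]
    exact hle z
  rwa [hφ, hψ] at this

lemma map_eq_add_sum_layers {F : C(Z, ℝ)} {m δ : ℝ} (hδ : 0 ≤ δ) {n : ℕ}
    (hF : ∀ z, F z ∈ Icc m (m + n * δ)) :
    η F = m + ∑ i ∈ range n, η ((layer (m + i * δ) δ).comp F) := by
  have hdecomp : (ContinuousMap.const ℝ m + ∑ i ∈ range n, layer (m + i * δ) δ).comp F = F := by
    ext z
    have := hF z
    simp only [ContinuousMap.comp_apply, ContinuousMap.add_apply, ContinuousMap.coe_sum,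
      Finset.sum_apply, ContinuousMap.const_apply, sum_layer hδ]
    rw [max_eq_left (by linarith [this.1]), min_eq_left (by linarith [this.2])]
    ring
  calc η F = hη.restrict F (ContinuousMap.const ℝ m + ∑ i ∈ range n, layer (m + i * δ) δ) := by
        rw [restrict_apply, hdecomp]
    _ = m + ∑ i ∈ range n, η ((layer (m + i * δ) δ).comp F) := by
        simp only [map_add, map_sum, restrict_apply, ContinuousMap.const_comp, hη.map_const]

lemma map_layer_add_le {F G : C(Z, ℝ)} (hFG : ∀ z, F z ≤ G z) {δ : ℝ} (hδ : 0 ≤ δ) (a : ℝ) :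
    η ((layer (a + δ) δ).comp F) ≤ η ((layer a δ).comp G) :=
  hη.map_le_map_of_saturated (fun _ => layer_mem_Icc hδ _ _) (fun _ => layer_mem_Icc hδ _ _)
    fun z hz => layer_of_add_le ((lt_of_layer_pos hz).le.trans (hFG z))

lemma sum_map_layers_le {F G : C(Z, ℝ)} (hFG : ∀ z, F z ≤ G z) {δ : ℝ} (hδ : 0 ≤ δ)
    (m : ℝ) (n : ℕ) :
    ∑ i ∈ range (n + 1), η ((layer (m + i * δ) δ).comp F)
      ≤ δ + ∑ i ∈ range (n + 1), η ((layer (m + i * δ) δ).comp G) := by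
  have hshift : ∀ i : ℕ, η ((layer (m + (i + 1 : ℕ) * δ) δ).comp F)
      ≤ η ((layer (m + i * δ) δ).comp G) := fun i => by
    convert hη.map_layer_add_le hFG hδ (m + i * δ) using 4
    push_cast
    ring
  have hbottom : η ((layer (m + (0 : ℕ) * δ) δ).comp F) ≤ δ :=
    hη.map_le_of_le_const fun _ => (layer_mem_Icc hδ _ _).2
  have htop : 0 ≤ η ((layer (m + n * δ) δ).comp G) :=
    hη.nonneg _ fun _ => (layer_mem_Icc hδ _ _).1
  rw [sum_range_succ', sum_range_succ]
  linarith [sum_le_sum fun i (_ : i ∈ range n) => hshift i]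

end IsQuasiState

theorem quasiState_monotone_general {Z : Type*} [TopologicalSpace Z] [CompactSpace Z]
    (η : C(Z, ℝ) → ℝ) (hη : IsQuasiState η)
    (F G : C(Z, ℝ)) (hFG : ∀ z, F z ≤ G z) : η F ≤ η G := by
  refine le_of_forall_pos_le_add fun ε hε => ?_
  set M := ‖F‖ + ‖G‖
  obtain ⟨n, hn⟩ := exists_nat_ge (2 * M / ε)
  have hrange : ∀ H : C(Z, ℝ), ‖H‖ ≤ M → ∀ z, H z ∈ Icc (-M) (-M + (n + 1 : ℕ) * ε) := by
    intro H hH z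
    have hHz := abs_le.mp ((Real.norm_eq_abs _ ▸ H.norm_coe_le_norm z).trans hH)
    have : 2 * M ≤ n * ε := (div_le_iff₀ hε).mp hn
    push_cast
    constructor <;> nlinarith
  rw [hη.map_eq_add_sum_layers hε.le (hrange F (by simp [M])),
    hη.map_eq_add_sum_layers hε.le (hrange G (by simp [M]))]
  linarith [hη.sum_map_layers_le hFG hε.le (-M) n]

/-- A quasi-state is monotone. -/
theorem quasiState_monotone {Z : Type*} [TopologicalSpace Z] [CompactSpace Z] [T2Space Z]
    (η : C(Z, ℝ) → ℝ) (hη : IsQuasiState η)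
    (F G : C(Z, ℝ)) (hFG : ∀ z, F z ≤ G z) : η F ≤ η G :=
  quasiState_monotone_general η hη F G hFG
end

section
/- Let (X, μ) be a probability measure space and H : X → ℝ a measurable function with m ≤ H(x) ≤ M for all x ∈ X. Let S, D_1, …, D_k be pairwise disjoint measurable subsets of X whose union is X, and let α_1 < α_2 < ⋯ < α_k be real numbers with m ≤ α_1, α_k ≤ M, such that α_1 ≤ H(x) ≤ α_k for all x ∈ S. Define b : [m, M] → ℝ by b(t) = μ(S ∩ {H ≤ t}) + Σ_{j : α_j < t} μ(D_j). Then M − ∫_m^M b(t) dt = ∫_X H dμ + Σ_{j=1}^k ∫_{D_j} (α_j − H) dμ. -/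
/-!
The layer-cake formula gives `∫_m^M μ(S ∩ {H ≤ t}) dt = M μ(S) − ∫_S H`, and the jump of
height `μ(D_j)` at `α_j` contributes `(M − α_j) μ(D_j)` to `∫_m^M b`. Since
`μ(S) + Σ_j μ(D_j) = 1` and `∫ H` splits along the partition, the two sides agree.
-/

open MeasureTheory Set

section

variable {X : Type*} [MeasurableSpace X] {μ : Measure X}

-- Layer cake for `M - f ≥ 0`, followed by the substitution `t ↦ M - t`.
lemma intervalIntegral_measureReal_setOf_le [IsFiniteMeasure μ] {f : X → ℝ} {m M : ℝ}
    (hf : Integrable f μ) (hmM : m ≤ M) (hf_mem : ∀ᵐ x ∂μ, f x ∈ Icc m M) :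
    ∫ t in m..M, μ.real {x | f x ≤ t} = M * μ.real univ - ∫ x, f x ∂μ := by
  have hlayer := ((integrable_const M).sub hf).integral_eq_integral_Ioc_meas_le (M := M - m)
    (hf_mem.mono fun x hx => sub_nonneg.2 hx.2) (hf_mem.mono fun x hx => sub_le_sub_left hx.1 M)
  simp only [Pi.sub_apply] at hlayer
  rw [integral_sub (integrable_const M) hf, integral_const, smul_eq_mul, mul_comm,
    ← intervalIntegral.integral_of_le (sub_nonneg.2 hmM)] at hlayer
  have hsub := intervalIntegral.integral_comp_sub_left (a := 0) (b := M - m)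
    (fun t => μ.real {x | f x ≤ t}) M
  simp only [sub_sub_cancel, sub_zero] at hsub
  rw [← hsub, hlayer]
  congr! 4 with t
  ext x
  exact le_sub_comm

lemma intervalIntegral_measureReal_inter_setOf_le [IsFiniteMeasure μ] {f : X → ℝ} {m M : ℝ}
    (hf : Measurable f) (hmM : m ≤ M) (hf_mem : ∀ x, f x ∈ Icc m M) (S : Set X) :
    ∫ t in m..M, μ.real (S ∩ {x | f x ≤ t}) = M * μ.real S - ∫ x in S, f x ∂μ := by
  have hrestrict : ∀ t, μ.real (S ∩ {x | f x ≤ t}) = (μ.restrict S).real {x | f x ≤ t} :=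
    fun t => by rw [measureReal_restrict_apply (measurableSet_le hf measurable_const), inter_comm]
  simp only [hrestrict]
  rw [intervalIntegral_measureReal_setOf_le (.of_mem_Icc m M hf.aemeasurable (.of_forall hf_mem))
    hmM (.of_forall hf_mem), measureReal_restrict_apply_univ]

lemma intervalIntegral_ite_lt {a c m M : ℝ} (hma : m ≤ a) (haM : a ≤ M) :
    ∫ t in m..M, (if a < t then c else 0) = (M - a) * c := by
  change ∫ t in m..M, (Ioi a).indicator (fun _ => c) t = _
  rw [intervalIntegral.integral_of_le (hma.trans haM), setIntegral_indicator measurableSet_Ioi,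
    Ioc_inter_Ioi, max_eq_right hma, setIntegral_const, Real.volume_real_Ioc_of_le haM,
    smul_eq_mul]

lemma monotone_ite_lt {a c : ℝ} (hc : 0 ≤ c) : Monotone fun t : ℝ => if a < t then c else 0 := by
  intro s t hst
  dsimp only
  split_ifs with hs ht
  exacts [le_rfl, absurd (hs.trans_le hst) ht, hc, le_rfl]

lemma integral_eq_setIntegral_add_sum_setIntegral {E : Type*} [NormedAddCommGroup E]
    [NormedSpace ℝ E] {ι : Type*} [Fintype ι] {f : X → E} (hf : Integrable f μ)
    {S : Set X} {D : ι → Set X} (hD : ∀ j, MeasurableSet (D j))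
    (hDdisj : Pairwise (Function.onFun Disjoint D)) (hSD : ∀ j, Disjoint S (D j))
    (hcover : S ∪ ⋃ j, D j = univ) :
    ∫ x, f x ∂μ = ∫ x in S, f x ∂μ + ∑ j, ∫ x in D j, f x ∂μ := by
  rw [← setIntegral_univ, ← hcover, setIntegral_union (disjoint_iUnion_right.2 hSD)
      (MeasurableSet.iUnion hD) hf.integrableOn hf.integrableOn,
    integral_iUnion_fintype hD hDdisj fun j => hf.integrableOn]

end

/-- The computation in the proof of the main theorem: if `(X, μ)` is a probability
space, `H : X → ℝ` takes values in `[m, M]`, the sets `S, D 1, …, D k` form a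
measurable partition of `X`, `α 1 < ⋯ < α k` lie in `[m, M]` and bound `H` on `S`,
and `b t = μ(S ∩ {H ≤ t}) + Σ_{j : α j < t} μ(D j)`, then
`M − ∫_m^M b(t) dt = ∫_X H dμ + Σ_j ∫_{D j} (α j − H) dμ`. -/
theorem grubb_quasiState_computation
    {X : Type*} [MeasurableSpace X] (μ : Measure X) [IsProbabilityMeasure μ]
    (H : X → ℝ) (hH : Measurable H) (m M : ℝ) (hbd : ∀ x, H x ∈ Set.Icc m M)
    (k : ℕ) (hk : 0 < k)
    (S : Set X) (D : Fin k → Set X)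
    (hDmeas : ∀ j, MeasurableSet (D j))
    (hDdisj : Pairwise (Function.onFun Disjoint D))
    (hSDdisj : ∀ j, Disjoint S (D j))
    (hcover : S ∪ (⋃ j, D j) = Set.univ)
    (α : Fin k → ℝ) (hα : StrictMono α)
    (hα₁ : m ≤ α ⟨0, hk⟩) (hαₖ : α ⟨k - 1, by omega⟩ ≤ M)
    (b : ℝ → ℝ)
    (hb : ∀ t, b t = (μ (S ∩ {x | H x ≤ t})).toReal +
      ∑ j : Fin k, if α j < t then (μ (D j)).toReal else 0) :
    M - ∫ t in m..M, b t =
      ∫ x, H x ∂μ + ∑ j : Fin k, ∫ x in D j, (α j - H x) ∂μ := by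
  have hαm : ∀ j, m ≤ α j := fun j => hα₁.trans (hα.monotone (Nat.zero_le _))
  have hαM : ∀ j, α j ≤ M := fun j => (hα.monotone (Nat.le_pred_of_lt j.isLt)).trans hαₖ
  have hmM : m ≤ M := (hαm ⟨0, hk⟩).trans (hαM ⟨0, hk⟩)
  have hHint : Integrable H μ := .of_mem_Icc m M hH.aemeasurable (.of_forall hbd)
  have hmass : μ.real S + ∑ j, μ.real (D j) = 1 := by
    simpa using (integral_eq_setIntegral_add_sum_setIntegral (μ := μ) (integrable_const (1 : ℝ))
      hDmeas hDdisj hSDdisj hcover).symm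
  have hb_int : ∫ t in m..M, b t =
      (M * μ.real S - ∫ x in S, H x ∂μ) + ∑ j, (M - α j) * μ.real (D j) := by
    have hS_mono : Monotone fun t => μ.real (S ∩ {x | H x ≤ t}) := fun s t hst =>
      measureReal_mono (inter_subset_inter_right S fun x (hx : H x ≤ s) => hx.trans hst)
    have hstep_mono : ∀ j, Monotone fun t => if α j < t then μ.real (D j) else 0 :=
      fun j => monotone_ite_lt measureReal_nonneg
    have hsum_mono : Monotone fun t => ∑ j, if α j < t then μ.real (D j) else 0 :=
      fun s t hst => Finset.sum_le_sum fun j _ => hstep_mono j hst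
    simp only [hb, ← measureReal_def]
    rw [intervalIntegral.integral_add hS_mono.intervalIntegrable hsum_mono.intervalIntegrable,
      intervalIntegral_measureReal_inter_setOf_le hH hmM hbd,
      intervalIntegral.integral_finsetSum fun j _ => (hstep_mono j).intervalIntegrable]
    simp only [intervalIntegral_ite_lt (hαm _) (hαM _)]
  have hD_sub : ∀ j, ∫ x in D j, (α j - H x) ∂μ = μ.real (D j) * α j - ∫ x in D j, H x ∂μ :=
    fun j => by
      rw [integral_sub (integrable_const _) hHint.integrableOn, setIntegral_const, smul_eq_mul]
  rw [hb_int, integral_eq_setIntegral_add_sum_setIntegral hHint hDmeas hDdisj hSDdisj hcover,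
    Finset.sum_congr rfl fun j _ => hD_sub j]
  simp only [sub_mul, Finset.sum_sub_distrib, ← Finset.mul_sum, mul_comm (α _)]
  rw [show ∑ j, μ.real (D j) = 1 - μ.real S by linarith]
  ring
end

section
/- Let X = 𝕋² = (ℝ/ℤ)² be the two-dimensional torus and let σ be a topological measure on X which is invariant under all translations of X. Let k, l be coprime integers, let φ : 𝕋² → ℝ/ℤ be the continuous group homomorphism φ(p,q) = l·p − k·q, and for n ≥ 2 a natural number let W = φ⁻¹(π([0, 1/n])) be the closed linear annulus of slope (k,l) and area 1/n, where π : ℝ → ℝ/ℤ is the projection. Then σ(W) ≤ 1/(n−1). -/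
/-- A topological measure (Aarnes) on a compact Hausdorff space `Z`. -/
structure IsTopMeasure {Z : Type*} [TopologicalSpace Z] (τ : Set Z → ℝ) : Prop where
  mem_Icc : ∀ A : Set Z, IsOpen A ∨ IsClosed A → τ A ∈ Set.Icc (0 : ℝ) 1
  univ : τ Set.univ = 1
  compl_add : ∀ K : Set Z, IsCompact K → τ Kᶜ + τ K = 1
  add : ∀ K K' : Set Z, IsCompact K → IsCompact K' → Disjoint K K' →
      τ (K ∪ K') = τ K + τ K'
  mono : ∀ K K' : Set Z, IsCompact K → IsCompact K' → K ⊆ K' → τ K ≤ τ K'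
  inner_reg : ∀ U : Set Z, IsOpen U →
      IsLUB {r : ℝ | ∃ K : Set Z, IsCompact K ∧ K ⊆ U ∧ τ K = r} (τ U)

/-- The two-dimensional torus `𝕋² = (ℝ/ℤ)²`. -/
abbrev Torus2 := UnitAddCircle × UnitAddCircle

namespace TopAnnulusAux

/-- The slope homomorphism. -/
noncomputable def phi (k l : ℤ) (x : Torus2) : UnitAddCircle := l • x.1 - k • x.2

lemma phi_add (k l : ℤ) (x v : Torus2) : phi k l (x + v) = phi k l x + phi k l v := by
  simp only [phi, Prod.fst_add, Prod.snd_add, smul_add]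
  abel

lemma phi_cont (k l : ℤ) : Continuous (phi k l) :=
  ((continuous_zsmul l).comp continuous_fst).sub ((continuous_zsmul k).comp continuous_snd)

lemma phi_surj (k l : ℤ) (hkl : IsCoprime k l) (t : UnitAddCircle) :
    ∃ v : Torus2, phi k l v = t := by
  obtain ⟨a, b, hab⟩ := hkl
  refine ⟨(b • t, -(a • t)), ?_⟩
  simp only [phi, smul_neg, sub_neg_eq_add, smul_smul]
  rw [← add_zsmul]
  have h1 : l * b + k * a = 1 := by linear_combination hab
  rw [h1, one_zsmul]

lemma image_translate (k l : ℤ) (v : Torus2) (S : Set UnitAddCircle) :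
    (fun x => x + v) '' (phi k l ⁻¹' S) = phi k l ⁻¹' ((fun s => s + phi k l v) '' S) := by
  ext x
  constructor
  · rintro ⟨y, hy, rfl⟩
    exact ⟨phi k l y, hy, (phi_add k l y v).symm⟩
  · rintro ⟨s, hs, hsx⟩
    refine ⟨x - v, ?_, sub_add_cancel x v⟩
    have hsx' : s + phi k l v = phi k l x := hsx
    have h := phi_add k l (x - v) v
    rw [sub_add_cancel] at h
    have : phi k l (x - v) = s := by
      have h2 : phi k l (x - v) + phi k l v = s + phi k l v := h.symm.trans hsx'.symm
      exact add_right_cancel h2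
    simpa [Set.mem_preimage, this] using hs

lemma arc_translate (a b c : ℝ) :
    (fun s : UnitAddCircle => s + (c : ℝ)) '' (((↑) : ℝ → UnitAddCircle) '' Set.Icc a b)
      = ((↑) : ℝ → UnitAddCircle) '' Set.Icc (a + c) (b + c) := by
  rw [show Set.Icc (a + c) (b + c) = (fun x => x + c) '' Set.Icc a b by
    simp [Set.image_add_const_Icc]]
  rw [Set.image_image, Set.image_image]
  refine Set.image_congr fun x _ => ?_
  norm_cast

lemma arc_disjoint (a c w : ℝ) (h1 : w < c - a) (h2 : c - a < 1 - w) :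
    Disjoint (((↑) : ℝ → UnitAddCircle) '' Set.Icc a (a + w))
             (((↑) : ℝ → UnitAddCircle) '' Set.Icc c (c + w)) := by
  rw [Set.disjoint_left]
  rintro z ⟨x, hx, rfl⟩ ⟨y, hy, hxy⟩
  have hmem : x - y ∈ AddSubgroup.zmultiples (1 : ℝ) :=
    QuotientAddGroup.eq_iff_sub_mem.mp hxy.symm
  obtain ⟨m, hm⟩ := AddSubgroup.mem_zmultiples_iff.mp hmem
  have hm' : (m : ℝ) = x - y := by simpa using hm
  obtain ⟨hx1, hx2⟩ := hx
  obtain ⟨hy1, hy2⟩ := hy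
  have h3 : (m : ℝ) < 0 := by rw [hm']; linarith
  have h4 : (-1 : ℝ) < m := by rw [hm']; linarith
  have h5 : m < 0 := by exact_mod_cast h3
  have h6 : (-1 : ℤ) < m := by exact_mod_cast h4
  omega

end TopAnnulusAux

open TopAnnulusAux in
/-- A translation-invariant topological measure on the torus satisfies
`σ(W) ≤ 1/(n−1)` for a closed linear annulus `W` of area `1/n`, `n ≥ 2`. -/
theorem topMeasure_annulus_le (σ : Set Torus2 → ℝ) (hσ : IsTopMeasure σ)
    (hinv : ∀ v : Torus2, ∀ A : Set Torus2, IsOpen A ∨ IsClosed A →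
      σ ((fun x => x + v) '' A) = σ A)
    (k l : ℤ) (hkl : IsCoprime k l) (n : ℕ) (hn : 2 ≤ n) :
    σ ((fun x : Torus2 => l • x.1 - k • x.2) ⁻¹'
        (((↑) : ℝ → UnitAddCircle) '' Set.Icc (0 : ℝ) (1 / n))) ≤ 1 / ((n : ℝ) - 1) := by
  have hN2 : (2 : ℝ) ≤ (n : ℝ) := by exact_mod_cast hn
  have hNpos : (0 : ℝ) < (n : ℝ) := by linarith
  have hN1pos : (0 : ℝ) < (n : ℝ) - 1 := by linarith
  -- basic sets
  have hcoe : Continuous ((↑) : ℝ → UnitAddCircle) := continuous_quotient_mk'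
  -- compactness/closedness of an arc preimage
  have harc : ∀ a b : ℝ, IsClosed (phi k l ⁻¹' (((↑) : ℝ → UnitAddCircle) '' Set.Icc a b)) :=
    fun a b => ((isCompact_Icc.image hcoe).isClosed).preimage (phi_cont k l)
  have harck : ∀ a b : ℝ,
      IsCompact (phi k l ⁻¹' (((↑) : ℝ → UnitAddCircle) '' Set.Icc a b)) :=
    fun a b => (harc a b).isCompact
  set W : Set Torus2 :=
    phi k l ⁻¹' (((↑) : ℝ → UnitAddCircle) '' Set.Icc (0 : ℝ) (1 / n)) with hWdef
  -- the family of translated annuli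
  set K : ℕ → Set Torus2 := fun j =>
    phi k l ⁻¹' (((↑) : ℝ → UnitAddCircle) ''
      Set.Icc ((j : ℝ) / ((n : ℝ) - 1)) ((j : ℝ) / ((n : ℝ) - 1) + 1 / n)) with hKdef
  have hKclosed : ∀ j, IsClosed (K j) := fun j => harc _ _
  have hKcompact : ∀ j, IsCompact (K j) := fun j => harck _ _
  -- each K j is a translate of W
  have hKmeas : ∀ j : ℕ, σ (K j) = σ W := by
    intro j
    obtain ⟨v, hv⟩ := phi_surj k l hkl (((j : ℝ) / ((n : ℝ) - 1) : ℝ) : UnitAddCircle)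
    have himg : (fun x => x + v) '' W = K j := by
      rw [hWdef, image_translate, hv, arc_translate]
      rw [hKdef]
      norm_num [add_comm]
    rw [← himg]
    exact hinv v W (Or.inr (harc _ _))
  -- pairwise disjointness for indices below n - 1
  have hdisj : ∀ i j : ℕ, i < n - 1 → j < n - 1 → i ≠ j → Disjoint (K i) (K j) := by
    have main : ∀ i j : ℕ, j < n - 1 → i < j → Disjoint (K i) (K j) := by
      intro i j hj hij
      refine Disjoint.preimage _ (arc_disjoint _ _ _ ?_ ?_)
      · have h1 : (i : ℝ) + 1 ≤ (j : ℝ) := by exact_mod_cast hij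
        rw [div_sub_div_same, div_lt_div_iff₀ hNpos hN1pos]
        nlinarith
      · have hj2 : (j : ℝ) ≤ (n : ℝ) - 2 := by
          have : j + 2 ≤ n := by omega
          have := (Nat.cast_le (α := ℝ)).mpr this
          push_cast at this
          linarith
        have hi0 : (0 : ℝ) ≤ (i : ℝ) := Nat.cast_nonneg i
        have hu : (n : ℝ) * (1 / n) = 1 := by field_simp
        have hupos : (0 : ℝ) < 1 / n := by positivity
        rw [div_sub_div_same, div_lt_iff₀ hN1pos]
        nlinarith
    intro i j hi hj hij
    rcases lt_or_gt_of_ne hij with h | h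
    · exact main i j hj h
    · exact (main j i hi h).symm
  -- σ ∅ = 0
  have hempty : σ (∅ : Set Torus2) = 0 := by
    have h := hσ.compl_add Set.univ isCompact_univ
    rw [Set.compl_univ, hσ.univ] at h
    linarith
  -- finite additivity over the family
  have key : ∀ m : ℕ, m ≤ n - 1 →
      IsCompact (⋃ j ∈ Finset.range m, K j) ∧
      σ (⋃ j ∈ Finset.range m, K j) = (m : ℝ) * σ W := by
    intro m
    induction m with
    | zero =>
      intro _
      refine ⟨by simpa using isCompact_empty, by simpa using hempty⟩
    | succ m ih =>
      intro hm
      obtain ⟨hc, hs⟩ := ih (by omega)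
      have hU : (⋃ j ∈ Finset.range (m + 1), K j)
          = (⋃ j ∈ Finset.range m, K j) ∪ K m := by
        rw [Finset.range_add_one, Finset.set_biUnion_insert, Set.union_comm]
      have hd : Disjoint (⋃ j ∈ Finset.range m, K j) (K m) := by
        rw [Set.disjoint_left]
        rintro x hx hx'
        simp only [Set.mem_iUnion, Finset.mem_range] at hx
        obtain ⟨j, hj, hxj⟩ := hx
        exact (Set.disjoint_left.mp (hdisj j m (by omega) (by omega) (by omega)) hxj) hx'
      constructor
      · rw [hU]; exact hc.union (hKcompact m)
      · rw [hU, hσ.add _ _ hc (hKcompact m) hd, hs, hKmeas m]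
        push_cast
        ring
  obtain ⟨hc, hs⟩ := key (n - 1) le_rfl
  have hle : σ (⋃ j ∈ Finset.range (n - 1), K j) ≤ 1 := by
    rw [← hσ.univ]
    exact hσ.mono _ _ hc isCompact_univ (Set.subset_univ _)
  rw [hs] at hle
  have hcast : ((n - 1 : ℕ) : ℝ) = (n : ℝ) - 1 := by
    have : 1 ≤ n := by omega
    push_cast [this]
    ring
  rw [hcast] at hle
  have : σ W ≤ 1 / ((n : ℝ) - 1) := by
    rw [le_div_iff₀ hN1pos]
    linarith [hle]
  exact this
end

section
/- Let X = 𝕋² = (ℝ/ℤ)² and let σ be a topological measure on X which is invariant under all translations of X. Let k, l be coprime integers, φ(p,q) = l·p − k·q, and for a natural number N ≥ 1 let W = φ⁻¹(π([0, 1/(2N)])) be the closed linear annulus of slope (k,l) and area 1/(2N). Then σ(W) ≥ 1/N − 1/(2N−1). -/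
/-!
Coprimality makes the linear form `φ` onto the circle, so translations of the torus move annuli of
slope `(k, l)` along the circle and `σ` of a closed annulus depends only on its width. The `n`
translates of a compact subset of an open annulus of width `1/n` by the steps `m/n` are disjoint,
so such an annulus has measure at most `1/n`. The complement of the `N` closed annuli of width
`1/(2N)` starting at `j/N` is covered by `N` disjoint open annuli of the same width, hence has
measure at most `1/2`, and additivity on compact sets gives `σ(W) ≥ 1/(2N) ≥ 1/N - 1/(2N-1)`.
-/

open Set

namespace IsTopMeasure

variable {Z : Type*} [TopologicalSpace Z] {σ : Set Z → ℝ}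

lemma empty (hσ : IsTopMeasure σ) : σ ∅ = 0 := by
  have h := hσ.compl_add ∅ isCompact_empty
  rw [compl_empty, hσ.univ] at h
  linarith

lemma le_one [CompactSpace Z] (hσ : IsTopMeasure σ) {K : Set Z} (hK : IsCompact K) : σ K ≤ 1 :=
  hσ.univ ▸ hσ.mono K Set.univ hK isCompact_univ (subset_univ K)

lemma le_of_isCompact_subset_isOpen (hσ : IsTopMeasure σ) {K U : Set Z} (hK : IsCompact K)
    (hU : IsOpen U) (hKU : K ⊆ U) : σ K ≤ σ U :=
  (hσ.inner_reg U hU).1 ⟨K, hK, hKU, rfl⟩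

lemma le_of_forall_isCompact_subset (hσ : IsTopMeasure σ) {U : Set Z} (hU : IsOpen U) {c : ℝ}
    (h : ∀ K, IsCompact K → K ⊆ U → σ K ≤ c) : σ U ≤ c :=
  (hσ.inner_reg U hU).2 (by rintro r ⟨K, hK, hKU, rfl⟩; exact h K hK hKU)

lemma mono_isOpen (hσ : IsTopMeasure σ) {U U' : Set Z} (hU : IsOpen U) (hU' : IsOpen U')
    (h : U ⊆ U') : σ U ≤ σ U' :=
  hσ.le_of_forall_isCompact_subset hU fun _K hK hKU =>
    hσ.le_of_isCompact_subset_isOpen hK hU' (hKU.trans h)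

lemma union_le_of_isOpen (hσ : IsTopMeasure σ) {U V : Set Z} (hU : IsOpen U) (hV : IsOpen V)
    (hUV : Disjoint U V) : σ (U ∪ V) ≤ σ U + σ V := by
  refine hσ.le_of_forall_isCompact_subset (hU.union hV) fun K hK hKUV => ?_
  have hsplit : K = K \ V ∪ K \ U := by
    ext x
    have := @disjoint_left.1 hUV x
    have := @hKUV x
    simp only [mem_union, mem_sdiff]
    tauto
  have hdisj : Disjoint (K \ V) (K \ U) :=
    disjoint_left.2 fun x hxV hxU => (hKUV hxV.1).elim hxU.2 hxV.2
  have hKVU : K \ V ⊆ U := fun x hx => (hKUV hx.1).resolve_right hx.2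
  have hKUV' : K \ U ⊆ V := fun x hx => (hKUV hx.1).resolve_left hx.2
  calc σ K = σ (K \ V) + σ (K \ U) := by
        rw [← hσ.add _ _ (hK.diff hV) (hK.diff hU) hdisj, ← hsplit]
    _ ≤ σ U + σ V := add_le_add (hσ.le_of_isCompact_subset_isOpen (hK.diff hV) hU hKVU)
        (hσ.le_of_isCompact_subset_isOpen (hK.diff hU) hV hKUV')

variable {ι : Type*}

lemma biUnion_finset_of_isCompact (hσ : IsTopMeasure σ) {s : Finset ι} {K : ι → Set Z}
    (hK : ∀ i ∈ s, IsCompact (K i)) (hd : (s : Set ι).PairwiseDisjoint K) :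
    σ (⋃ i ∈ s, K i) = ∑ i ∈ s, σ (K i) := by
  classical
  induction s using Finset.induction_on with
  | empty => simp [hσ.empty]
  | insert a s ha ih =>
    rw [Finset.coe_insert, pairwiseDisjoint_insert] at hd
    have hKs : ∀ i ∈ s, IsCompact (K i) := fun i hi => hK i (Finset.mem_insert_of_mem hi)
    rw [Finset.set_biUnion_insert, Finset.sum_insert ha,
      hσ.add _ _ (hK a (Finset.mem_insert_self a s))
        (s.isCompact_biUnion hKs)
        (disjoint_iUnion₂_right.2 fun i hi => hd.2 i hi (ne_of_mem_of_not_mem hi ha).symm),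
      ih hKs hd.1]

lemma biUnion_finset_le_of_isOpen (hσ : IsTopMeasure σ) {s : Finset ι} {U : ι → Set Z}
    (hU : ∀ i ∈ s, IsOpen (U i)) (hd : (s : Set ι).PairwiseDisjoint U) :
    σ (⋃ i ∈ s, U i) ≤ ∑ i ∈ s, σ (U i) := by
  classical
  induction s using Finset.induction_on with
  | empty => simp [hσ.empty]
  | insert a s ha ih =>
    rw [Finset.coe_insert, pairwiseDisjoint_insert] at hd
    have hUs : ∀ i ∈ s, IsOpen (U i) := fun i hi => hU i (Finset.mem_insert_of_mem hi)
    rw [Finset.set_biUnion_insert, Finset.sum_insert ha]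
    calc σ (U a ∪ ⋃ i ∈ s, U i) ≤ σ (U a) + σ (⋃ i ∈ s, U i) :=
          hσ.union_le_of_isOpen (hU a (Finset.mem_insert_self a s)) (isOpen_biUnion hUs)
            (disjoint_iUnion₂_right.2 fun i hi => hd.2 i hi (ne_of_mem_of_not_mem hi ha).symm)
      _ ≤ σ (U a) + ∑ i ∈ s, σ (U i) := add_le_add_right (ih hUs hd.1) _

end IsTopMeasure

lemma Real.exists_lt_mem_Ico_mul {n : ℕ} {h r : ℝ} (hh : 0 < h) (hr : r ∈ Ico 0 (n * h)) :
    ∃ j < n, r ∈ Ico (j * h) ((j + 1) * h) := by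
  have hr0 : 0 ≤ r / h := div_nonneg hr.1 hh.le
  refine ⟨⌊r / h⌋₊, (Nat.floor_lt hr0).2 ((div_lt_iff₀ hh).2 hr.2), ?_, ?_⟩
  · exact (le_div_iff₀ hh).1 (Nat.floor_le hr0)
  · exact (div_lt_iff₀ hh).1 (Nat.lt_floor_add_one _)

section Annulus

variable {G : Type*}

def annulus (f : G → UnitAddCircle) (I : Set ℝ) : Set G := f ⁻¹' ((↑) '' I)

lemma annulus_mono (f : G → UnitAddCircle) {I J : Set ℝ} (h : I ⊆ J) :
    annulus f I ⊆ annulus f J :=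
  preimage_mono (image_mono h)

lemma disjoint_annulus (f : G → UnitAddCircle) {I J : Set ℝ} {a : ℝ}
    (hI : I ⊆ Ico a (a + 1)) (hJ : J ⊆ Ico a (a + 1)) (hIJ : Disjoint I J) :
    Disjoint (annulus f I) (annulus f J) := by
  refine Disjoint.preimage f (disjoint_left.2 ?_)
  rintro _ ⟨x, hx, rfl⟩ ⟨y, hy, hyx⟩
  have : y = x := (AddCircle.coe_eq_coe_iff_of_mem_Ico (hJ hy) (hI hx)).1 hyx
  exact disjoint_left.1 hIJ hx (this ▸ hy)

lemma pairwiseDisjoint_annulus_Ico (f : G → UnitAddCircle) (a : ℝ) {n : ℕ} {h : ℝ}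
    (hh : 0 ≤ h) (hnh : n * h ≤ 1) : (Finset.range n : Set ℕ).PairwiseDisjoint
      fun m : ℕ => annulus f (Ico (a + m * h) (a + (m + 1) * h)) := by
  have hsub : ∀ m ∈ (Finset.range n : Set ℕ),
      Ico (a + m * h) (a + (m + 1) * h) ⊆ Ico a (a + 1) := by
    intro m hm x hx
    have : (m + 1 : ℝ) ≤ n := by exact_mod_cast Finset.mem_range.1 hm
    constructor <;> nlinarith [hx.1, hx.2]
  intro i hi j hj hij
  refine disjoint_annulus f (hsub i hi) (hsub j hj) ?_
  simpa [Function.onFun, zsmul_eq_mul] using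
    pairwise_disjoint_Ico_add_zsmul a h (Nat.cast_injective.ne hij : (i : ℤ) ≠ j)

lemma compl_biUnion_annulus_Icc_subset (f : G → UnitAddCircle) {N : ℕ} {t : ℝ}
    (hNt : N * (2 * t) = 1) :
    (⋃ j ∈ Finset.range N, annulus f (Icc (j * (2 * t)) (t + j * (2 * t))))ᶜ ⊆
      ⋃ j ∈ Finset.range N, annulus f (Ioo (t + j * (2 * t)) (t + j * (2 * t) + t)) := by
  intro x hx
  have ht0 : 0 < 2 * t := pos_of_mul_pos_right (hNt ▸ one_pos) N.cast_nonneg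
  obtain ⟨r, hr, hrx⟩ : f x ∈ ((↑) : ℝ → UnitAddCircle) '' Ico 0 (0 + 1) := by
    rw [AddCircle.coe_image_Ico_eq]; trivial
  obtain ⟨j, hjN, hj⟩ := Real.exists_lt_mem_Ico_mul ht0 (by rwa [zero_add, ← hNt] at hr)
  refine mem_biUnion (Finset.mem_range.2 hjN) ⟨r, ⟨?_, by linarith [hj.2]⟩, hrx⟩
  by_contra! hrt
  exact hx (mem_biUnion (Finset.mem_range.2 hjN) ⟨r, ⟨hj.1, by linarith⟩, hrx⟩)

lemma isClosed_annulus_Icc [TopologicalSpace G] {f : G → UnitAddCircle} (hf : Continuous f)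
    (a b : ℝ) : IsClosed (annulus f (Icc a b)) :=
  (isCompact_Icc.image (AddCircle.continuous_mk' 1)).isClosed.preimage hf

lemma isOpen_annulus_Ioo [TopologicalSpace G] {f : G → UnitAddCircle} (hf : Continuous f)
    (a b : ℝ) : IsOpen (annulus f (Ioo a b)) :=
  (QuotientAddGroup.isOpenMap_coe _ isOpen_Ioo).preimage hf

lemma image_add_annulus [AddGroup G] {F : Type*} [FunLike F G UnitAddCircle]
    [AddMonoidHomClass F G UnitAddCircle]
    (f : F) {v : G} {c : ℝ} (hv : f v = c) (I : Set ℝ) :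
    (· + v) '' annulus f I = annulus f ((· + c) '' I) := by
  have : ((↑) : ℝ → UnitAddCircle) '' ((· + c) '' I) =
      (· + (c : UnitAddCircle)) '' ((↑) '' I) := by
    simp only [image_image, AddCircle.coe_add]
  rw [annulus, annulus, this, image_add_right, image_add_right, preimage_preimage,
    preimage_preimage]
  simp only [map_add, map_neg, hv]

def IsTranslationInvariant [Add G] [TopologicalSpace G] (σ : Set G → ℝ) : Prop :=
  ∀ v : G, ∀ A : Set G, IsOpen A ∨ IsClosed A → σ ((fun x => x + v) '' A) = σ A

variable [AddCommGroup G] [TopologicalSpace G] {σ : Set G → ℝ} (hσ : IsTopMeasure σ)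
  (hinv : IsTranslationInvariant σ) (f : G →ₜ+ UnitAddCircle) (hf : Function.Surjective f)
include hinv hf

lemma measure_annulus_Icc_add (a b c : ℝ) :
    σ (annulus f (Icc (a + c) (b + c))) = σ (annulus f (Icc a b)) := by
  obtain ⟨v, hv⟩ := hf c
  rw [← image_add_const_Icc, ← image_add_annulus f hv]
  exact hinv v _ (Or.inr (isClosed_annulus_Icc f.continuous a b))

variable [ContinuousAdd G] [CompactSpace G] [T2Space G]
include hσ

lemma measure_annulus_Ioo_le (s : ℝ) {n : ℕ} {t : ℝ} (ht : n * t = 1) :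
    σ (annulus f (Ioo s (s + t))) ≤ t := by
  have hn : (0 : ℝ) < n := Nat.cast_pos.2 (Nat.pos_of_ne_zero fun h => by simp [h] at ht)
  have ht0 : 0 < t := pos_of_mul_pos_right (ht ▸ one_pos) hn.le
  refine hσ.le_of_forall_isCompact_subset (isOpen_annulus_Ioo (f := f) f.continuous _ _)
    fun K hK hKs => ?_
  choose v hv using fun m : ℕ => hf ((m * t : ℝ) : UnitAddCircle)
  set T : ℕ → Set G := fun m => (· + v m) '' K
  have hTcpt : ∀ m, IsCompact (T m) := fun m => hK.image (continuous_add_const _)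
  have hT : ∀ m, T m ⊆ annulus f (Ico (s + m * t) (s + (m + 1) * t)) := fun m =>
    calc T m ⊆ (· + v m) '' annulus f (Ioo s (s + t)) := image_mono hKs
      _ = annulus f (Ioo (s + m * t) (s + t + m * t)) := by
        rw [image_add_annulus f (hv m), image_add_const_Ioo]
      _ ⊆ _ := annulus_mono f (Ioo_subset_Ico_self.trans (Ico_subset_Ico_right (by linarith)))
  have hle := hσ.le_one ((Finset.range n).isCompact_biUnion fun m _ => hTcpt m)
  rw [hσ.biUnion_finset_of_isCompact (fun m _ => hTcpt m)
      ((pairwiseDisjoint_annulus_Ico f s ht0.le ht.le).mono_on fun m _ => hT m),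
    Finset.sum_congr rfl fun m _ => hinv (v m) K (Or.inr hK.isClosed), Finset.sum_const,
    Finset.card_range, nsmul_eq_mul] at hle
  exact le_of_mul_le_mul_left (hle.trans ht.ge) hn

lemma le_measure_annulus_Icc {N : ℕ} {t : ℝ} (ht : 2 * N * t = 1) :
    t ≤ σ (annulus f (Icc 0 t)) := by
  have hN0 : (0 : ℝ) < N := Nat.cast_pos.2 (Nat.pos_of_ne_zero fun h => by simp [h] at ht)
  have hNt : (N : ℝ) * (2 * t) = 1 := by rw [← ht]; ring
  have ht0 : 0 < t := pos_of_mul_pos_right (ht ▸ one_pos) (by positivity)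
  set W : ℕ → Set G := fun j => annulus f (Icc (j * (2 * t)) (t + j * (2 * t)))
  set O : ℕ → Set G := fun j => annulus f (Ioo (t + j * (2 * t)) (t + j * (2 * t) + t))
  set V := ⋃ j ∈ Finset.range N, W j
  have hWcpt : ∀ j, IsCompact (W j) := fun j => (isClosed_annulus_Icc f.continuous _ _).isCompact
  have hVcpt : IsCompact V := (Finset.range N).isCompact_biUnion fun j _ => hWcpt j
  have hσV : σ V = N * σ (annulus f (Icc 0 t)) := by
    have hσW : ∀ j, σ (W j) = σ (annulus f (Icc 0 t)) := fun j => by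
      simpa only [zero_add] using measure_annulus_Icc_add hinv f hf 0 t (j * (2 * t))
    rw [hσ.biUnion_finset_of_isCompact (fun j _ => hWcpt j)
        ((pairwiseDisjoint_annulus_Ico f 0 (by positivity) hNt.le).mono_on fun j _ =>
          annulus_mono f fun x hx => ⟨by linarith [hx.1], by linarith [hx.2]⟩),
      Finset.sum_congr rfl fun j _ => hσW j, Finset.sum_const, Finset.card_range, nsmul_eq_mul]
  have hσVc : σ Vᶜ ≤ N * t :=
    calc σ Vᶜ ≤ σ (⋃ j ∈ Finset.range N, O j) :=
          hσ.mono_isOpen hVcpt.isClosed.isOpen_compl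
            (isOpen_biUnion fun j _ => isOpen_annulus_Ioo f.continuous _ _)
            (compl_biUnion_annulus_Icc_subset f hNt)
      _ ≤ ∑ j ∈ Finset.range N, σ (O j) :=
          hσ.biUnion_finset_le_of_isOpen (fun j _ => isOpen_annulus_Ioo f.continuous _ _)
            ((pairwiseDisjoint_annulus_Ico f t (by positivity) hNt.le).mono_on fun j _ =>
              annulus_mono f fun x hx => ⟨by linarith [hx.1], by linarith [hx.2]⟩)
      _ ≤ ∑ j ∈ Finset.range N, t := Finset.sum_le_sum fun j _ =>
          measure_annulus_Ioo_le hσ hinv f hf _ (n := 2 * N) (by push_cast; exact ht)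
      _ = N * t := by rw [Finset.sum_const, Finset.card_range, nsmul_eq_mul]
  have := hσ.compl_add V hVcpt
  exact le_of_mul_le_mul_left (by linarith) hN0

end Annulus

def slopeForm (k l : ℤ) : Torus2 →ₜ+ UnitAddCircle where
  toFun x := l • x.1 - k • x.2
  map_zero' := by simp
  map_add' x y := by simp only [Prod.fst_add, Prod.snd_add, smul_add]; abel
  continuous_toFun := by fun_prop

lemma slopeForm_surjective {k l : ℤ} (hkl : IsCoprime k l) :
    Function.Surjective (slopeForm k l) := by
  obtain ⟨a, b, hab⟩ := hkl
  intro z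
  refine ⟨(b • z, -(a • z)), ?_⟩
  change l • b • z - k • -(a • z) = z
  rw [smul_neg, sub_neg_eq_add, smul_smul, smul_smul, ← add_smul,
    show l * b + k * a = 1 by linarith, one_smul]

/-- A translation-invariant topological measure on the torus satisfies
`σ(W) ≥ 1/N − 1/(2N−1)` for a closed linear annulus `W` of area `1/(2N)`, `N ≥ 1`. -/
theorem topMeasure_annulus_ge (σ : Set Torus2 → ℝ) (hσ : IsTopMeasure σ)
    (hinv : ∀ v : Torus2, ∀ A : Set Torus2, IsOpen A ∨ IsClosed A →
      σ ((fun x => x + v) '' A) = σ A)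
    (k l : ℤ) (hkl : IsCoprime k l) (N : ℕ) (hN : 1 ≤ N) :
    1 / (N : ℝ) - 1 / (2 * (N : ℝ) - 1) ≤
      σ ((fun x : Torus2 => l • x.1 - k • x.2) ⁻¹'
        (((↑) : ℝ → UnitAddCircle) '' Set.Icc (0 : ℝ) (1 / (2 * N)))) := by
  have hN1 : (1 : ℝ) ≤ N := by exact_mod_cast hN
  have hhalf : 1 / (N : ℝ) = 1 / (2 * N) + 1 / (2 * N) := by field_simp; ring
  have hmono : 1 / (2 * N : ℝ) ≤ 1 / (2 * N - 1) :=
    one_div_le_one_div_of_le (by linarith) (by linarith)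
  have hwidth : 2 * (N : ℝ) * (1 / (2 * N)) = 1 := by field_simp
  exact le_trans (by linarith)
    (le_measure_annulus_Icc hσ hinv (slopeForm k l) (slopeForm_surjective hkl) hwidth)
end

section
/- Let X = 𝕋² = (ℝ/ℤ)² and let σ be a topological measure on X which is invariant under all translations of X. Let k, l be coprime integers, φ(p,q) = l·p − k·q, let α ∈ (0,1), and let A = φ⁻¹(π([0, α])) be the closed linear annulus of slope (k,l) and area α. For a natural number N ≥ 1 set m_N = ⌊2Nα⌋ and suppose m_N ≥ 1. Then (m_N − 1)·(1/N − 1/(2N−1)) ≤ σ(A) ≤ 1 − (2N − 1 − m_N)·(1/N − 1/(2N−1)). -/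
/-!
Write `f w` for the mass of a closed annulus of slope `(k, l)` and width `w`; since `(k, l)` is
coprime, all such annuli are translates of each other, so `f w` does not depend on the position.
Packing `n` disjoint annuli of width `u < 1 / n` gives `f u ≤ 1 / n`. Covering the complement of
an annulus of width `w` by `2 s + 1` annuli of width just above `(1 - w) / (2 s + 1)` then gives
`1 - (2 s + 1) / n ≤ f w` as soon as `n (1 - w) < 2 s + 1`. Applied to an annulus of width just
below `1 - w` in the complement, this gives `f w ≤ (2 s + 1) / n` as soon as `n w < 2 s + 1`.
Both bounds of the theorem are the case `n = 4 N (2 N - 1)` with `s` chosen from `⌊2 N α⌋`.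
-/

open Set

lemma exists_mem_Icc_of_le_add_mul {a d z : ℝ} (m : ℕ) (h₁ : a ≤ z)
    (h₂ : z ≤ a + (m + 1) * d) : ∃ j ≤ m, z ∈ Icc (a + j * d) (a + j * d + d) := by
  induction m with
  | zero => exact ⟨0, le_rfl, by simpa using h₁, by simpa using h₂⟩
  | succ m ih =>
    by_cases hz : z ≤ a + (m + 1) * d
    · obtain ⟨j, hj, hzj⟩ := ih hz
      exact ⟨j, hj.trans m.le_succ, hzj⟩
    · refine ⟨m + 1, le_rfl, ?_, ?_⟩ <;> push_cast at h₂ ⊢ <;> linarith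

lemma one_div_sub_one_div_two_mul_sub_one {x : ℝ} (hx : 1 ≤ x) :
    1 / x - 1 / (2 * x - 1) = 4 * (x - 1) / (4 * x * (2 * x - 1)) := by
  rw [div_sub_div _ _ (by positivity) (by linarith)]
  field_simp
  ring

namespace IsTopMeasure

variable {Z : Type*} [TopologicalSpace Z] {τ : Set Z → ℝ}

lemma apply_empty (hτ : IsTopMeasure τ) : τ ∅ = 0 := by
  have h := hτ.compl_add ∅ isCompact_empty
  rwa [compl_empty, hτ.univ, add_eq_left] at h

lemma apply_biUnion_finset (hτ : IsTopMeasure τ) {ι : Type*} {s : Finset ι} {K : ι → Set Z}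
    (hK : ∀ i ∈ s, IsCompact (K i)) (hd : (s : Set ι).PairwiseDisjoint K) :
    τ (⋃ i ∈ s, K i) = ∑ i ∈ s, τ (K i) := by
  classical
  induction s using Finset.induction_on with
  | empty => simp [hτ.apply_empty]
  | insert i s hi ih =>
    rw [Finset.set_biUnion_insert, Finset.sum_insert hi,
      hτ.add _ _ (hK i (s.mem_insert_self i)) (s.isCompact_biUnion fun j hj => hK j
        (Finset.mem_insert_of_mem hj)) ?_,
      ih (fun j hj => hK j (Finset.mem_insert_of_mem hj)) (hd.subset (by simp))]
    exact disjoint_iUnion₂_right.mpr fun j hj =>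
      hd (by simp) (by simp [hj]) (ne_of_mem_of_not_mem hj hi).symm

lemma add_le_one_of_disjoint [T2Space Z] (hτ : IsTopMeasure τ) {K K' : Set Z}
    (hK : IsCompact K) (hK' : IsCompact K') (h : Disjoint K K') : τ K + τ K' ≤ 1 := by
  rw [← hτ.add K K' hK hK' h]
  exact (hτ.mem_Icc _ (.inr (hK.union hK').isClosed)).2

lemma one_le_add_of_univ_subset_union [T2Space Z] (hτ : IsTopMeasure τ) {K K' : Set Z}
    (hK : IsCompact K) (hK' : IsCompact K') (h : Set.univ ⊆ K ∪ K') : 1 ≤ τ K + τ K' := by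
  have hcompl : τ Kᶜ ≤ τ K' := by
    refine (hτ.inner_reg Kᶜ hK.isClosed.isOpen_compl).2 ?_
    rintro _ ⟨C, hC, hCK, rfl⟩
    refine hτ.mono C K' hC hK' fun x hx => ?_
    exact (h (mem_univ x)).resolve_left (hCK hx)
  linarith [hτ.compl_add K hK]

end IsTopMeasure

namespace UnitAddCircle

def arc (c u : ℝ) : Set UnitAddCircle := ((↑) : ℝ → UnitAddCircle) '' Icc c (c + u)

lemma isCompact_arc (c u : ℝ) : IsCompact (arc c u) :=
  isCompact_Icc.image (AddCircle.continuous_mk' 1)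

lemma arc_zero_one : arc 0 1 = univ := AddCircle.coe_image_Icc_eq 1 0

lemma disjoint_arc {a u c v : ℝ} (h₁ : a + u < c) (h₂ : c + v < a + 1) :
    Disjoint (arc a u) (arc c v) := by
  rw [disjoint_left]
  rintro _ ⟨x, hx, rfl⟩ ⟨y, hy, hxy⟩
  obtain ⟨n, hn⟩ := (AddCircle.coe_eq_zero_iff 1).mp (by rw [AddCircle.coe_sub, hxy, sub_self] :
    ((y - x : ℝ) : UnitAddCircle) = 0)
  rw [zsmul_one] at hn
  have h0 : (0 : ℝ) < n := by linarith [hx.2, hy.1]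
  have h1 : (n : ℝ) < 1 := by linarith [hx.1, hy.2]
  norm_cast at h0 h1
  omega

lemma arc_add (c p u : ℝ) : arc (c + p) u = (· + (p : UnitAddCircle)) '' arc c u := by
  simp only [arc, image_image, ← AddCircle.coe_add]
  rw [← image_image _ (· + p), image_add_const_Icc, add_right_comm]

end UnitAddCircle

namespace Torus2

open UnitAddCircle

def slope (k l : ℤ) : Torus2 →+ UnitAddCircle :=
  AddMonoidHom.mk' (fun x => l • x.1 - k • x.2) fun x y => by
    simp only [Prod.fst_add, Prod.snd_add, smul_add]
    abel

variable {k l : ℤ}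

lemma continuous_slope : Continuous (slope k l) :=
  ((continuous_zsmul l).comp continuous_fst).sub ((continuous_zsmul k).comp continuous_snd)

lemma slope_surjective (hkl : IsCoprime k l) : Function.Surjective (slope k l) := by
  obtain ⟨a, b, hab⟩ := hkl
  refine fun y => ⟨(b • y, -(a • y)), ?_⟩
  change l • b • y - k • -(a • y) = y
  rw [smul_neg, sub_neg_eq_add, smul_smul, smul_smul, ← add_smul, mul_comm, mul_comm k,
    add_comm, hab, one_smul]

def annulus (k l : ℤ) (c u : ℝ) : Set Torus2 := slope k l ⁻¹' arc c u

lemma isCompact_annulus (c u : ℝ) : IsCompact (annulus k l c u) :=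
  ((isCompact_arc c u).isClosed.preimage continuous_slope).isCompact

lemma disjoint_annulus {a u c v : ℝ} (h₁ : a + u < c) (h₂ : c + v < a + 1) :
    Disjoint (annulus k l a u) (annulus k l c v) :=
  (disjoint_arc h₁ h₂).preimage _

lemma exists_annulus_eq_image_add (hkl : IsCoprime k l) (c u : ℝ) :
    ∃ v : Torus2, annulus k l c u = (· + v) '' annulus k l 0 u := by
  obtain ⟨v, hv⟩ := slope_surjective hkl c
  refine ⟨v, ?_⟩
  rw [image_add_right, annulus, annulus, ← preimage_comp, ← zero_add c, arc_add,
    image_add_right]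
  ext x
  simp [hv]

def annuli (k l : ℤ) (p δ u : ℝ) (c : ℕ) : Set Torus2 :=
  ⋃ i ∈ Finset.range c, annulus k l (p + i * δ) u

lemma isCompact_annuli (p δ u : ℝ) (c : ℕ) : IsCompact (annuli k l p δ u c) :=
  (Finset.range c).isCompact_biUnion fun _ _ => isCompact_annulus _ _

lemma pairwiseDisjoint_annulus {p δ u : ℝ} {c : ℕ} (hu : 0 ≤ u) (hδ : u < δ)
    (hc : ((c : ℝ) - 1) * δ + u < 1) :
    ((Finset.range c : Set ℕ)).PairwiseDisjoint fun i => annulus k l (p + i * δ) u := by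
  intro i hi j hj hij
  simp only [Finset.coe_range, mem_Iio] at hi hj
  have key : ∀ {i j : ℕ}, i < j → j < c → Disjoint (annulus k l (p + i * δ) u)
      (annulus k l (p + j * δ) u) := fun {i j} hlt hj => by
    have hij' : (i : ℝ) + 1 ≤ j := by exact_mod_cast hlt
    have hj' : (j : ℝ) + 1 ≤ c := by exact_mod_cast hj
    have hi0 : (0 : ℝ) ≤ i := i.cast_nonneg
    exact disjoint_annulus (by nlinarith) (by nlinarith)
  rcases hij.lt_or_gt with hlt | hlt
  · exact key hlt hj
  · exact (key hlt hi).symm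

lemma univ_subset_annulus_union_annuli {w d u : ℝ} {s : ℕ} (hd : (2 * s + 1) * d = 1 - w)
    (hdu : d ≤ u) :
    univ ⊆ (annulus k l 0 w ∪ annuli k l (w + d) (2 * d) u s) ∪
      annuli k l w (2 * d) u (s + 1) := by
  intro x _
  obtain ⟨z, hz, hzx⟩ : slope k l x ∈ arc 0 1 := arc_zero_one ▸ mem_univ _
  rw [zero_add] at hz
  by_cases hzw : z ≤ w
  · exact .inl (.inl ⟨z, ⟨hz.1, by rwa [zero_add]⟩, hzx⟩)
  obtain ⟨j, hj, hzj⟩ := exists_mem_Icc_of_le_add_mul (d := d) (2 * s) (le_of_not_ge hzw)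
    (by push_cast; linarith [hz.2])
  have hxj : x ∈ annulus k l (w + j * d) u := ⟨z, ⟨hzj.1, by linarith [hzj.2]⟩, hzx⟩
  obtain ⟨i, rfl | rfl⟩ := Nat.even_or_odd' j
  · refine .inr (mem_iUnion₂.mpr ⟨i, Finset.mem_range.mpr (by omega), ?_⟩)
    convert hxj using 2
    push_cast
    ring
  · refine .inl (.inr (mem_iUnion₂.mpr ⟨i, Finset.mem_range.mpr (by omega), ?_⟩))
    convert hxj using 2
    push_cast
    ring

section Invariant

variable {σ : Set Torus2 → ℝ} (hσ : IsTopMeasure σ)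
  (hinv : ∀ v : Torus2, ∀ A : Set Torus2, IsOpen A ∨ IsClosed A →
    σ ((fun x => x + v) '' A) = σ A)
  (hkl : IsCoprime k l)
include hinv hkl

lemma measure_annulus (c u : ℝ) : σ (annulus k l c u) = σ (annulus k l 0 u) := by
  obtain ⟨v, hv⟩ := exists_annulus_eq_image_add hkl c u
  rw [hv, hinv v _ (.inr (isCompact_annulus 0 u).isClosed)]

include hσ

lemma measure_annuli {p δ u : ℝ} {c : ℕ} (hu : 0 ≤ u) (hδ : u < δ)
    (hc : ((c : ℝ) - 1) * δ + u < 1) :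
    σ (annuli k l p δ u c) = c * σ (annulus k l 0 u) := by
  rw [annuli, hσ.apply_biUnion_finset (fun _ _ => isCompact_annulus _ _)
    (pairwiseDisjoint_annulus hu hδ hc)]
  simp [measure_annulus hinv hkl]

lemma natCast_mul_measure_annulus_le_one {n : ℕ} {u : ℝ} (hn : 0 < n) (hu : 0 ≤ u)
    (hnu : n * u < 1) : n * σ (annulus k l 0 u) ≤ 1 := by
  have hn' : (0 : ℝ) < n := by exact_mod_cast hn
  have hu' : u < 1 / n := by rwa [lt_div_iff₀ hn', mul_comm]
  rw [← measure_annuli hσ hinv hkl (p := 0) hu hu']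
  · exact (hσ.mem_Icc _ (.inr (isCompact_annuli _ _ _ _).isClosed)).2
  · rw [sub_mul, mul_one_div_cancel hn'.ne']
    linarith

/-- A topological measure is not subadditive, so the `2 s + 1` annuli covering the complement of
`annulus k l 0 w` are split alternately into two disjoint families, and only one of the two compact
sets covering the torus contains `annulus k l 0 w`. -/
lemma one_le_measure_annulus_add {w d u : ℝ} {s : ℕ} (hd : (2 * s + 1) * d = 1 - w)
    (hdu : d ≤ u) (hu : u < 2 * d) (huw : u < w + d) :
    1 ≤ σ (annulus k l 0 w) + (2 * s + 1) * σ (annulus k l 0 u) := by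
  have hs : (0 : ℝ) ≤ s := s.cast_nonneg
  have hodd := measure_annuli hσ hinv hkl (p := w + d) (c := s) (by linarith) hu (by nlinarith)
  have heven := measure_annuli hσ hinv hkl (p := w) (c := s + 1) (by linarith) hu
    (by push_cast; nlinarith)
  have hdisj : Disjoint (annulus k l 0 w) (annuli k l (w + d) (2 * d) u s) :=
    disjoint_iUnion₂_right.mpr fun i hi => by
      have hi' : (i : ℝ) + 1 ≤ s := by exact_mod_cast Finset.mem_range.mp hi
      have hi0 : (0 : ℝ) ≤ i := i.cast_nonneg
      exact disjoint_annulus (by nlinarith) (by nlinarith)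
  have hcover := hσ.one_le_add_of_univ_subset_union
    ((isCompact_annulus 0 w).union (isCompact_annuli _ _ _ _)) (isCompact_annuli _ _ _ _)
    (univ_subset_annulus_union_annuli (k := k) (l := l) hd hdu)
  rw [hσ.add _ _ (isCompact_annulus 0 w) (isCompact_annuli _ _ _ _) hdisj, hodd, heven] at hcover
  push_cast at hcover
  linarith

lemma one_sub_div_le_measure_annulus {w : ℝ} (hw : w ∈ Ioo 0 1) {n s : ℕ} (hn : 0 < n)
    (h : n * (1 - w) < 2 * s + 1) : 1 - (2 * s + 1) / n ≤ σ (annulus k l 0 w) := by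
  have hn' : (0 : ℝ) < n := by exact_mod_cast hn
  have hs : (0 : ℝ) < 2 * s + 1 := by positivity
  set d := (1 - w) / (2 * s + 1)
  have hd : (2 * s + 1) * d = 1 - w := mul_div_cancel₀ _ hs.ne'
  have hd0 : 0 < d := div_pos (by linarith [hw.2]) hs
  have hdn : d < 1 / n := by
    rw [div_lt_div_iff₀ hs hn']
    linarith
  obtain ⟨u, hdu, hu⟩ := exists_between
    (lt_min hdn (lt_min (by linarith : d < 2 * d) (by linarith [hw.1] : d < w + d)))
  have hun : n * u < 1 := by
    have := hu.trans_le (min_le_left _ _)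
    rwa [lt_div_iff₀ hn', mul_comm] at this
  have hpack : σ (annulus k l 0 u) ≤ 1 / n := by
    rw [le_div_iff₀ hn', mul_comm]
    exact natCast_mul_measure_annulus_le_one hσ hinv hkl hn (by linarith) hun
  have hcover := one_le_measure_annulus_add hσ hinv hkl (s := s) hd hdu.le
    (hu.trans_le ((min_le_right _ _).trans (min_le_left _ _)))
    (hu.trans_le ((min_le_right _ _).trans (min_le_right _ _)))
  have := mul_le_mul_of_nonneg_left hpack hs.le
  rw [mul_one_div] at this
  linarith

lemma measure_annulus_le_div {w : ℝ} (hw : w ∈ Ioo 0 1) {n s : ℕ} (hn : 0 < n)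
    (h : n * w < 2 * s + 1) : σ (annulus k l 0 w) ≤ (2 * s + 1) / n := by
  have hn' : (0 : ℝ) < n := by exact_mod_cast hn
  have hwn : w < (2 * s + 1) / n := by
    rw [lt_div_iff₀ hn']
    linarith
  obtain ⟨β, hwβ, hβ⟩ := exists_between (lt_min hwn hw.2)
  have hβn : n * β < 2 * s + 1 := by
    rw [mul_comm, ← lt_div_iff₀ hn']
    exact hβ.trans_le (min_le_left _ _)
  have hβ1 : β < 1 := hβ.trans_le (min_le_right _ _)
  have hdisj : Disjoint (annulus k l 0 w) (annulus k l ((w + β) / 2) (1 - β)) :=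
    disjoint_annulus (by linarith) (by linarith)
  have hgap := hσ.add_le_one_of_disjoint (isCompact_annulus _ _) (isCompact_annulus _ _) hdisj
  rw [measure_annulus hinv hkl ((w + β) / 2)] at hgap
  have := one_sub_div_le_measure_annulus hσ hinv hkl (w := 1 - β)
    ⟨by linarith, by linarith [hw.1]⟩ hn (by rwa [sub_sub_cancel])
  linarith

lemma sub_one_mul_le_measure_annulus {α : ℝ} (hα : α ∈ Ioo 0 1) {N : ℕ} (hN : 1 ≤ N)
    {m : ℤ} (hm1 : 1 ≤ m) (hm : (m : ℝ) ≤ 2 * N * α) :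
    ((m : ℝ) - 1) * (1 / (N : ℝ) - 1 / (2 * (N : ℝ) - 1)) ≤ σ (annulus k l 0 α) := by
  have hN' : (1 : ℝ) ≤ N := by exact_mod_cast hN
  have hm1' : (1 : ℝ) ≤ m := by exact_mod_cast hm1
  have hm2 : m ≤ 2 * N - 1 := by
    have : (m : ℝ) < 2 * N := by nlinarith [hα.2]
    have : m < 2 * N := by exact_mod_cast this
    omega
  have hmN : ((m : ℝ) - 1) * (N - 1) ≤ 2 * (N - 1) * (N - 1) := by
    have : (m : ℝ) ≤ 2 * N - 1 := by exact_mod_cast hm2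
    nlinarith
  obtain ⟨s, hs⟩ := Int.eq_ofNat_of_zero_le
    (a := 2 * N * (2 * N - 1) - 2 * (m - 1) * (N - 1) - 1) (by nlinarith)
  have hsR : (s : ℝ) = 2 * N * (2 * N - 1) - 2 * (m - 1) * (N - 1) - 1 := by
    exact_mod_cast hs.symm
  have hn : ((4 * N * (2 * N - 1) : ℕ) : ℝ) = 4 * N * (2 * N - 1) := by
    push_cast [Nat.cast_sub (by omega : 1 ≤ 2 * N)]
    ring
  have hbound := one_sub_div_le_measure_annulus hσ hinv hkl hα (s := s)
    (n := 4 * N * (2 * N - 1)) (Nat.mul_pos (by omega) (by omega)) ?_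
  · have hpos : (0 : ℝ) < 4 * N * (2 * N - 1) := by nlinarith
    calc ((m : ℝ) - 1) * (1 / (N : ℝ) - 1 / (2 * (N : ℝ) - 1))
        = 4 * (m - 1) * (N - 1) / (4 * N * (2 * N - 1)) := by
          rw [one_div_sub_one_div_two_mul_sub_one hN', mul_div_assoc']
          ring
      _ ≤ (4 * (m - 1) * (N - 1) + 1) / (4 * N * (2 * N - 1)) := by gcongr; linarith
      _ = _ := by
          rw [hn, hsR, eq_sub_iff_add_eq, ← add_div, div_eq_one_iff_eq hpos.ne']
          ring
      _ ≤ _ := hbound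
  · rw [hn, hsR]
    nlinarith [mul_le_mul_of_nonneg_right hm (by linarith : (0 : ℝ) ≤ 2 * N - 1)]

lemma measure_annulus_le_one_sub {α : ℝ} (hα : α ∈ Ioo 0 1) {N : ℕ} (hN : 1 ≤ N)
    {m : ℤ} (hm : 2 * N * α < m + 1) :
    σ (annulus k l 0 α) ≤
      1 - (2 * (N : ℝ) - 1 - m) * (1 / (N : ℝ) - 1 / (2 * (N : ℝ) - 1)) := by
  have hN' : (1 : ℝ) ≤ N := by exact_mod_cast hN
  have hpos : (0 : ℝ) < 4 * N * (2 * N - 1) := by nlinarith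
  rcases le_or_gt (2 * (N : ℤ) - 1) m with hm2 | hm2
  · have hm2' : (2 * N - 1 : ℝ) ≤ m := by exact_mod_cast hm2
    have hgap : 0 ≤ 1 / (N : ℝ) - 1 / (2 * N - 1) := by
      rw [one_div_sub_one_div_two_mul_sub_one hN']
      exact div_nonneg (by linarith) hpos.le
    have := (hσ.mem_Icc _ (.inr (isCompact_annulus (k := k) (l := l) 0 α).isClosed)).2
    nlinarith
  have hm0 : 0 ≤ m := by
    have : (-1 : ℝ) < m := by nlinarith [hα.1]
    have : (-1 : ℤ) < m := by exact_mod_cast this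
    omega
  have hm2' : (m : ℝ) ≤ 2 * N - 2 := by
    have : m ≤ 2 * N - 2 := by omega
    exact_mod_cast this
  obtain ⟨s, hs⟩ := Int.eq_ofNat_of_zero_le
    (a := 2 * N * (2 * N - 1) - 2 * (2 * N - 1 - m) * (N - 1) - 1)
    (by nlinarith [mul_nonneg hm0 (by omega : (0 : ℤ) ≤ N - 1)])
  have hsR : (s : ℝ) = 2 * N * (2 * N - 1) - 2 * (2 * N - 1 - m) * (N - 1) - 1 := by
    exact_mod_cast hs.symm
  have hn : ((4 * N * (2 * N - 1) : ℕ) : ℝ) = 4 * N * (2 * N - 1) := by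
    push_cast [Nat.cast_sub (by omega : 1 ≤ 2 * N)]
    ring
  have hbound := measure_annulus_le_div hσ hinv hkl hα (s := s)
    (n := 4 * N * (2 * N - 1)) (Nat.mul_pos (by omega) (by omega)) ?_
  · calc σ (annulus k l 0 α) ≤ _ := hbound
      _ = 1 - (4 * (2 * N - 1 - m) * (N - 1) + 1) / (4 * N * (2 * N - 1)) := by
          rw [hn, hsR, eq_sub_iff_add_eq, ← add_div, div_eq_one_iff_eq hpos.ne']
          ring
      _ ≤ 1 - 4 * (2 * N - 1 - m) * (N - 1) / (4 * N * (2 * N - 1)) := by gcongr; linarith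
      _ = _ := by
          rw [one_div_sub_one_div_two_mul_sub_one hN', mul_div_assoc']
          ring
  · rw [hn, hsR]
    nlinarith [mul_lt_mul_of_pos_right hm (by linarith : (0 : ℝ) < 2 * N - 1)]

end Invariant

end Torus2

/-- Two-sided bounds on the value of a translation-invariant topological measure on a
closed linear annulus `A` of area `α`, in terms of `m_N = ⌊2Nα⌋`. -/
theorem topMeasure_annulus_bounds (σ : Set Torus2 → ℝ) (hσ : IsTopMeasure σ)
    (hinv : ∀ v : Torus2, ∀ A : Set Torus2, IsOpen A ∨ IsClosed A →
      σ ((fun x => x + v) '' A) = σ A)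
    (k l : ℤ) (hkl : IsCoprime k l) (α : ℝ) (hα : α ∈ Set.Ioo (0 : ℝ) 1)
    (N : ℕ) (hN : 1 ≤ N) (mN : ℤ) (hmN : mN = ⌊2 * (N : ℝ) * α⌋) (hmN1 : 1 ≤ mN) :
    ((mN : ℝ) - 1) * (1 / (N : ℝ) - 1 / (2 * (N : ℝ) - 1)) ≤
      σ ((fun x : Torus2 => l • x.1 - k • x.2) ⁻¹'
        (((↑) : ℝ → UnitAddCircle) '' Set.Icc (0 : ℝ) α)) ∧
    σ ((fun x : Torus2 => l • x.1 - k • x.2) ⁻¹'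
        (((↑) : ℝ → UnitAddCircle) '' Set.Icc (0 : ℝ) α)) ≤
      1 - (2 * (N : ℝ) - 1 - (mN : ℝ)) * (1 / (N : ℝ) - 1 / (2 * (N : ℝ) - 1)) := by
  have hA : (fun x : Torus2 => l • x.1 - k • x.2) ⁻¹'
      (((↑) : ℝ → UnitAddCircle) '' Set.Icc (0 : ℝ) α) = Torus2.annulus k l 0 α := by
    rw [Torus2.annulus, UnitAddCircle.arc, zero_add]
    rfl
  rw [hA]
  subst hmN
  exact ⟨Torus2.sub_one_mul_le_measure_annulus hσ hinv hkl hα hN hmN1 (Int.floor_le _),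
    Torus2.measure_annulus_le_one_sub hσ hinv hkl hα hN (Int.lt_floor_add_one _)⟩
end
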